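/- For every integer r ≥ 1, the equation ∫_0^1 (x + 1 − (1/r) Σ_{m=1}^r cos(2πmt))^{−1} dt = 1 has a unique solution x in (0,∞); writing this solution as x = 1/σ_r² with σ_r > 0, in the nearest-neighbour case r = 1 one has the explicit value σ_1² = √2 + 1. -/

import Mathlib

/-!
Since the cosine average `f` is at most `1`, the integrand `(x + 1 - f t)⁻¹` is positive,
continuous, and strictly decreasing in `x > 0`, with `F x ≤ x⁻¹`; hence `F` is continuous and
strictly decreasing and `F 2 < 1`. Near `t = 0` one has `1 - f t ≤ 2π²r²t²`, so on an interval of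
length `δ ~ r⁻²` the integrand is of size `r²` once `x ~ r⁻²`, which gives `F x ≥ 1`; the
intermediate value theorem then yields the unique root. For `r = 1` the integral is the classical
`∫₀¹ (a - cos 2πt)⁻¹ dt = (a² - 1)^(-1/2)`, and `a = (√2 + 1)⁻¹ + 1 = √2` gives `1`.
-/

open MeasureTheory Real Set

noncomputable def greenIntegral (f : ℝ → ℝ) (x : ℝ) : ℝ :=
  ∫ t in (0:ℝ)..1, (x + 1 - f t)⁻¹

namespace greenIntegral

variable {f : ℝ → ℝ}

lemma add_one_sub_pos (hf₁ : ∀ t, f t ≤ 1) {x : ℝ} (hx : 0 < x) (t : ℝ) :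
    0 < x + 1 - f t := by
  linarith [hf₁ t]

lemma continuous_integrand (hf : Continuous f) (hf₁ : ∀ t, f t ≤ 1) {x : ℝ} (hx : 0 < x) :
    Continuous fun t ↦ (x + 1 - f t)⁻¹ :=
  (continuous_const.sub hf).inv₀ fun t ↦ (add_one_sub_pos hf₁ hx t).ne'

lemma strictAntiOn (hf : Continuous f) (hf₁ : ∀ t, f t ≤ 1) :
    StrictAntiOn (greenIntegral f) (Ioi 0) := by
  intro x (hx : 0 < x) y (hy : 0 < y) hxy
  have hlt : ∀ t, (y + 1 - f t)⁻¹ < (x + 1 - f t)⁻¹ := fun t ↦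
    inv_strictAnti₀ (add_one_sub_pos hf₁ hx t) (by linarith)
  exact intervalIntegral.integral_lt_integral_of_continuousOn_of_le_of_exists_lt one_pos
    (continuous_integrand hf hf₁ hy).continuousOn (continuous_integrand hf hf₁ hx).continuousOn
    (fun t _ ↦ (hlt t).le) ⟨0, by simp, hlt 0⟩

lemma continuousOn (hf : Continuous f) (hf₁ : ∀ t, f t ≤ 1) :
    ContinuousOn (greenIntegral f) (Ioi 0) := by
  rw [continuousOn_iff_continuous_domRestrict]
  refine intervalIntegral.continuous_parametric_intervalIntegral_of_continuous'
    (μ := volume) (f := fun (x : Ioi (0:ℝ)) t ↦ (x + 1 - f t)⁻¹) ?_ 0 1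
  exact ((continuous_subtype_val.comp continuous_fst).add continuous_const |>.sub
    (hf.comp continuous_snd)).inv₀ fun p ↦ (add_one_sub_pos hf₁ p.1.2 p.2).ne'

lemma le_inv (hf : Continuous f) (hf₁ : ∀ t, f t ≤ 1) {x : ℝ} (hx : 0 < x) :
    greenIntegral f x ≤ x⁻¹ := by
  have := intervalIntegral.integral_mono_on zero_le_one
    ((continuous_integrand hf hf₁ hx).intervalIntegrable _ _)
    (intervalIntegrable_const (μ := volume))
    fun t _ ↦ inv_anti₀ hx (by linarith [hf₁ t])
  simpa [greenIntegral] using this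

lemma div_two_mul_le (hf : Continuous f) (hf₁ : ∀ t, f t ≤ 1) {x δ : ℝ} (hx : 0 < x) (hδ₀ : 0 ≤ δ)
    (hδ₁ : δ ≤ 1) (hnear : ∀ t ∈ Icc 0 δ, 1 - f t ≤ x) :
    δ / (2 * x) ≤ greenIntegral f x := by
  have hint := continuous_integrand hf hf₁ hx
  have hhead : δ / (2 * x) ≤ ∫ t in (0:ℝ)..δ, (x + 1 - f t)⁻¹ := by
    have := intervalIntegral.integral_mono_on hδ₀ (intervalIntegrable_const (μ := volume))
      (hint.intervalIntegrable _ _) fun t ht ↦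
        show (2 * x)⁻¹ ≤ _ from inv_anti₀ (add_one_sub_pos hf₁ hx t) (by linarith [hnear t ht])
    rwa [intervalIntegral.integral_const, smul_eq_mul, sub_zero, ← div_eq_mul_inv] at this
  have htail : 0 ≤ ∫ t in δ..1, (x + 1 - f t)⁻¹ :=
    intervalIntegral.integral_nonneg hδ₁ fun t _ ↦ (inv_pos.2 (add_one_sub_pos hf₁ hx t)).le
  rw [greenIntegral, ← intervalIntegral.integral_add_adjacent_intervals
    (hint.intervalIntegrable 0 δ) (hint.intervalIntegrable δ 1)]
  linarith

lemma existsUnique_eq_one (hf : Continuous f) (hf₁ : ∀ t, f t ≤ 1) {x₀ : ℝ} (hx₀ : 0 < x₀)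
    (h : 1 ≤ greenIntegral f x₀) : ∃! x, 0 < x ∧ greenIntegral f x = 1 := by
  have hx₀_le : x₀ ≤ 2 := by
    have := (le_inv hf hf₁ hx₀).trans' h
    rw [le_inv_comm₀ one_pos hx₀] at this
    linarith
  have h₂ : greenIntegral f 2 ≤ 1 := by linarith [le_inv hf hf₁ two_pos]
  obtain ⟨x, hx, hx_eq⟩ := intermediate_value_Icc' hx₀_le
    ((continuousOn hf hf₁).mono fun y hy ↦ hx₀.trans_le hy.1) ⟨h₂, h⟩
  refine ⟨x, ⟨hx₀.trans_le hx.1, hx_eq⟩, fun y hy ↦ ?_⟩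
  exact (strictAntiOn hf hf₁).injOn hy.1 (hx₀.trans_le hx.1) (hy.2.trans hx_eq.symm)

lemma one_le_of_sub_le_mul_sq (hf : Continuous f) (hf₁ : ∀ t, f t ≤ 1) {K : ℝ} (hK : 1 / 2 ≤ K)
    (hquad : ∀ t ∈ Icc (0:ℝ) 1, 1 - f t ≤ K * t ^ 2) :
    1 ≤ greenIntegral f (4 * K)⁻¹ := by
  have hK₀ : 0 < K := by linarith
  have hδ₁ : (2 * K)⁻¹ ≤ 1 := inv_le_one_of_one_le₀ (by linarith)
  have hnear : ∀ t ∈ Icc 0 (2 * K)⁻¹, 1 - f t ≤ (4 * K)⁻¹ := fun t ht ↦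
    calc 1 - f t ≤ K * t ^ 2 := hquad t ⟨ht.1, ht.2.trans hδ₁⟩
      _ ≤ K * ((2 * K)⁻¹) ^ 2 := by gcongr; exacts [ht.1, ht.2]
      _ = (4 * K)⁻¹ := by field_simp; ring
  calc 1 = (2 * K)⁻¹ / (2 * (4 * K)⁻¹) := by field_simp; ring
    _ ≤ greenIntegral f (4 * K)⁻¹ :=
      div_two_mul_le hf hf₁ (by positivity) (by positivity) hδ₁ hnear

end greenIntegral

noncomputable def avgCos (r : ℕ) (t : ℝ) : ℝ :=
  (1 / (r : ℝ)) * ∑ m ∈ Finset.Icc 1 r, cos (2 * π * m * t)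

lemma continuous_avgCos (r : ℕ) : Continuous (avgCos r) := by
  unfold avgCos
  fun_prop

lemma avgCos_le_one (r : ℕ) (t : ℝ) : avgCos r t ≤ 1 := by
  have hsum : ∑ m ∈ Finset.Icc 1 r, cos (2 * π * m * t) ≤ r := by
    simpa using Finset.sum_le_card_nsmul (Finset.Icc 1 r) _ 1 fun m _ ↦ cos_le_one _
  calc avgCos r t ≤ 1 / (r : ℝ) * r := by unfold avgCos; gcongr
    _ ≤ 1 := by rw [one_div_mul_eq_div]; exact div_self_le_one _

lemma one_sub_avgCos_le {r : ℕ} (hr : 1 ≤ r) (t : ℝ) :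
    1 - avgCos r t ≤ 2 * π ^ 2 * r ^ 2 * t ^ 2 := by
  have hr₀ : (0 : ℝ) < r := by exact_mod_cast hr
  have hterm : ∀ m ∈ Finset.Icc 1 r, 1 - 2 * π ^ 2 * r ^ 2 * t ^ 2 ≤ cos (2 * π * m * t) := by
    intro m hm
    have hmr : (m : ℝ) ^ 2 ≤ r ^ 2 := by
      gcongr
      exact_mod_cast (Finset.mem_Icc.1 hm).2
    have := one_sub_sq_div_two_le_cos (x := 2 * π * m * t)
    nlinarith [mul_le_mul_of_nonneg_left hmr (by positivity : (0 : ℝ) ≤ 2 * π ^ 2 * t ^ 2)]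
  have hsum := Finset.card_nsmul_le_sum (Finset.Icc 1 r) _ _ hterm
  simp only [Nat.card_Icc, add_tsub_cancel_right, nsmul_eq_mul] at hsum
  unfold avgCos
  have hmean := div_le_div_of_nonneg_right hsum hr₀.le
  rw [mul_div_cancel_left₀ _ hr₀.ne'] at hmean
  rw [one_div_mul_eq_div]
  linarith

/-- Since `(a + s)(a - s) = 1`, this is the usual antiderivative of `s / (a - cos θ)` through
`arctan (√((a + 1)/(a - 1)) tan (θ/2))`, rewritten so that it has no jump at `θ = π`. -/
lemma hasDerivAt_add_arctan_sin_div {a s t : ℝ} (ha : 1 < a) (hs : 0 < s)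
    (hs2 : s ^ 2 = a ^ 2 - 1) :
    HasDerivAt (fun t ↦ t + π⁻¹ * arctan (sin (2 * π * t) / (a + s - cos (2 * π * t))))
      (s * (a - cos (2 * π * t))⁻¹) t := by
  have hcos := cos_le_one (2 * π * t)
  have hD : 0 < a + s - cos (2 * π * t) := by linarith
  have hθ : HasDerivAt (fun t ↦ 2 * π * t) (2 * π) t := by
    simpa using (hasDerivAt_id t).const_mul (2 * π)
  have hquot := ((hasDerivAt_sin _).comp t hθ).div
    (((hasDerivAt_cos _).comp t hθ).const_sub (a + s)) hD.ne'
  refine ((hasDerivAt_id' t).add (hquot.arctan.const_mul π⁻¹)).congr_deriv ?_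
  have hpy := sin_sq_add_cos_sq (2 * π * t)
  have hgap : 0 < a - cos (2 * π * t) := by linarith
  simp only [Function.comp_apply, Pi.div_apply]
  generalize sin (2 * π * t) = sn at *
  generalize cos (2 * π * t) = cs at *
  field_simp
  linear_combination (-(a - cs) - s) * hpy - (a - cs + s) * hs2

lemma integral_inv_sub_cos_two_pi_mul {a : ℝ} (ha : 1 < a) :
    ∫ t in (0:ℝ)..1, (a - cos (2 * π * t))⁻¹ = (√(a ^ 2 - 1))⁻¹ := by
  have ha2 : 0 < a ^ 2 - 1 := by nlinarith
  set s := √(a ^ 2 - 1)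
  have hs : 0 < s := sqrt_pos.2 ha2
  have hcont : Continuous fun t ↦ s * (a - cos (2 * π * t))⁻¹ :=
    continuous_const.mul <| (continuous_const.sub (by fun_prop)).inv₀ fun t ↦
      (sub_pos.2 ((cos_le_one _).trans_lt ha)).ne'
  have hFTC := intervalIntegral.integral_eq_sub_of_hasDerivAt
    (fun t _ ↦ hasDerivAt_add_arctan_sin_div ha hs (sq_sqrt ha2.le))
    (hcont.intervalIntegrable 0 1)
  rw [intervalIntegral.integral_const_mul] at hFTC
  simp only [mul_one, mul_zero, sin_two_pi, cos_two_pi, sin_zero, cos_zero, zero_div,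
    arctan_zero, add_zero, sub_zero] at hFTC
  exact (inv_eq_of_mul_eq_one_right hFTC).symm

theorem sigma_r_characterization :
    (∀ r : ℕ, 1 ≤ r →
      ∃! x : ℝ, 0 < x ∧
        ∫ t in (0:ℝ)..1,
          (x + 1 - (1 / (r : ℝ)) * ∑ m ∈ Finset.Icc 1 r, Real.cos (2 * π * m * t))⁻¹ = 1) ∧
    (∫ t in (0:ℝ)..1,
        (1 / (Real.sqrt 2 + 1) + 1 - (1 / (1 : ℝ)) *
          ∑ m ∈ Finset.Icc (1:ℕ) 1, Real.cos (2 * π * m * t))⁻¹ = 1) := by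
  refine ⟨fun r hr ↦ ?_, ?_⟩
  · have hK : 1 / 2 ≤ 2 * π ^ 2 * (r : ℝ) ^ 2 := by
      have hr₁ : (1 : ℝ) ≤ r := by exact_mod_cast hr
      calc 1 / 2 ≤ 2 * 1 ^ 2 * 1 ^ 2 := by norm_num
        _ ≤ 2 * π ^ 2 * (r : ℝ) ^ 2 := by gcongr; linarith [pi_gt_three]
    exact greenIntegral.existsUnique_eq_one (continuous_avgCos r) (avgCos_le_one r)
      (inv_pos.2 (by linarith))
      (greenIntegral.one_le_of_sub_le_mul_sq (continuous_avgCos r) (avgCos_le_one r) hK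
        fun t _ ↦ one_sub_avgCos_le hr t)
  · have hsqrt : √2 ^ 2 = 2 := sq_sqrt zero_le_two
    have hintegrand : ∀ t : ℝ, 1 / (√2 + 1) + 1 - 1 / (1 : ℝ) *
        ∑ m ∈ Finset.Icc (1:ℕ) 1, cos (2 * π * m * t) = √2 - cos (2 * π * t) := fun t ↦ by
      have hinv : 1 / (√2 + 1) = √2 - 1 := by
        rw [div_eq_iff (by positivity)]
        linear_combination -hsqrt
      simp [hinv]
    simp only [hintegrand, integral_inv_sub_cos_two_pi_mul one_lt_sqrt_two, hsqrt]
    norm_num
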